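/- arXiv:2006.08836 — 5 statements merged into one kernel-verified Lean document; each statement's English description precedes it below -/
import Mathlib

section
/- Let r ≥ 1 and m ≥ 2 be integers. Then the number of pairs (a, b) of vectors a, b ∈ {0,1}^r whose dot product a·b = a₁b₁ + ⋯ + a_r b_r is divisible by m is at most (3/4)·4^r. Equivalently, if a and b are independent uniformly random vectors in {0,1}^r, then the probability that a·b ≡ 0 (mod m) is at most 3/4. -/
open Finset

lemma fiber_flip_bound {r m : ℕ} (hm : 2 ≤ m) (a : Fin r → Fin 2) (ha : a ≠ 0) :
    2 * (univ.filter (fun b : Fin r → Fin 2 => m ∣ ∑ i, (a i : ℕ) * (b i : ℕ))).card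
      ≤ 2 ^ r := by
  classical
  obtain ⟨i, hi⟩ : ∃ i, a i ≠ 0 := by
    by_contra h; push_neg at h; exact ha (funext h)
  have hai : (a i : ℕ) = 1 := by
    have h2 := (a i).isLt
    have h0 : (a i).val ≠ 0 := fun h => hi (Fin.ext h)
    omega
  set S := univ.filter (fun b : Fin r → Fin 2 => m ∣ ∑ i, (a i : ℕ) * (b i : ℕ)) with hS
  set f : (Fin r → Fin 2) → (Fin r → Fin 2) :=
    fun b => Function.update b i (if b i = 0 then 1 else 0) with hf
  have hfin2 : ∀ x : Fin 2, x = 0 ∨ x = 1 := by decide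
  -- sums
  have hsum : ∀ b : Fin r → Fin 2,
      (∑ j, (a j : ℕ) * (b j : ℕ))
        = (a i : ℕ) * (b i : ℕ) + ∑ j ∈ univ.erase i, (a j : ℕ) * (b j : ℕ) := by
    intro b
    rw [← Finset.add_sum_erase _ _ (mem_univ i)]
  have hrest : ∀ b : Fin r → Fin 2,
      (∑ j ∈ univ.erase i, (a j : ℕ) * ((f b) j : ℕ))
        = ∑ j ∈ univ.erase i, (a j : ℕ) * ((b j : ℕ)) := by
    intro b
    refine Finset.sum_congr rfl fun j hj => ?_
    rw [hf]
    simp [Function.update_of_ne (Finset.ne_of_mem_erase hj)]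
  have hmaps : ∀ b ∈ S, f b ∈ univ \ S := by
    intro b hb
    simp only [hS, mem_filter, mem_univ, true_and] at hb
    simp only [mem_sdiff, mem_univ, true_and, hS, mem_filter]
    intro hfb
    have h1 := hsum b
    have h2 := hsum (f b)
    rw [hrest b] at h2
    rw [hai, one_mul] at h1 h2
    have hfbi : (f b) i = (if b i = 0 then 1 else 0) := by
      simp [hf]
    have hv : ((b i : ℕ)) + (((f b) i : ℕ)) = 1 := by
      rcases hfin2 (b i) with h | h <;> rw [hfbi, h] <;> simp
    have key : (∑ j, (a j : ℕ) * ((f b) j : ℕ)) = (∑ j, (a j : ℕ) * (b j : ℕ)) + 1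
        ∨ (∑ j, (a j : ℕ) * (b j : ℕ)) = (∑ j, (a j : ℕ) * ((f b) j : ℕ)) + 1 := by
      omega
    have hdvd : m ∣ 1 := by
      rcases key with hk | hk
      · have := Nat.dvd_sub hfb hb
        rw [hk, Nat.add_sub_cancel_left] at this
        exact this
      · have := Nat.dvd_sub hb hfb
        rw [hk, Nat.add_sub_cancel_left] at this
        exact this
    have := Nat.le_of_dvd one_pos hdvd
    omega
  have hinj : Set.InjOn f S := by
    intro b hb b' hb' hbb
    funext j
    by_cases hj : j = i
    · subst hj
      have := congrFun hbb j
      simp only [hf, Function.update_self] at this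
      rcases hfin2 (b j) with h | h <;> rcases hfin2 (b' j) with h' | h' <;>
        simp [h, h'] at this ⊢
    · have := congrFun hbb j
      simpa [hf, Function.update_of_ne hj] using this
  have hle : S.card ≤ (univ \ S).card :=
    Finset.card_le_card_of_injOn f hmaps hinj
  have hcardu : (univ : Finset (Fin r → Fin 2)).card = 2 ^ r := by
    simp [Finset.card_univ]
  have := Finset.card_sdiff_of_subset (Finset.subset_univ S)
  omega

lemma real_pow_bound (r : ℕ) (hr : 1 ≤ r) :
    (2 ^ r : ℝ) + ((2 : ℝ) ^ r - 1) * 2 ^ (r - 1) ≤ (3 / 4) * 4 ^ r := by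
  obtain ⟨s, rfl⟩ : ∃ s, r = s + 1 := ⟨r - 1, by omega⟩
  have hx : (1 : ℝ) ≤ 2 ^ s := one_le_pow₀ (by norm_num)
  have h4 : (4 : ℝ) ^ (s + 1) = 4 * ((2 : ℝ) ^ s * (2 : ℝ) ^ s) := by
    have h4s : (4 : ℝ) ^ s = 2 ^ s * 2 ^ s := by
      rw [show (4 : ℝ) = 2 * 2 by norm_num, mul_pow]
    rw [pow_succ, h4s]; ring
  have h2 : (2 : ℝ) ^ (s + 1) = 2 * 2 ^ s := by rw [pow_succ]; ring
  have hs : s + 1 - 1 = s := by omega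
  rw [hs, h2, h4]
  nlinarith [sq_nonneg ((2:ℝ)^s)]

/-- For integers `r ≥ 1` and `m ≥ 2`, the number of pairs `(a, b)` of vectors in `{0,1}^r`
whose dot product is divisible by `m` is at most `(3/4)·4^r`. -/
theorem card_dot_product_divisible_le (r m : ℕ) (hr : 1 ≤ r) (hm : 2 ≤ m) :
    ((Finset.univ.filter
        (fun p : (Fin r → Fin 2) × (Fin r → Fin 2) =>
          m ∣ ∑ i, (p.1 i : ℕ) * (p.2 i : ℕ))).card : ℝ) ≤ (3 / 4) * 4 ^ r := by
  classical
  have hpow : 2 ^ r = 2 * 2 ^ (r - 1) := by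
    rw [← pow_succ']; congr 1; omega
  set T := Finset.univ.filter
      (fun p : (Fin r → Fin 2) × (Fin r → Fin 2) =>
        m ∣ ∑ i, (p.1 i : ℕ) * (p.2 i : ℕ)) with hT
  clear_value T
  have hcard : T.card = ∑ a : Fin r → Fin 2,
      (univ.filter (fun b : Fin r → Fin 2 => m ∣ ∑ i, (a i : ℕ) * (b i : ℕ))).card := by
    rw [Finset.card_eq_sum_card_fiberwise (f := Prod.fst) (t := univ) (fun x _ => mem_univ _)]
    refine Finset.sum_congr rfl fun a _ => ?_
    refine Finset.card_bij' (fun p _ => p.2) (fun b _ => (a, b)) ?_ ?_ ?_ ?_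
    · intro p hp
      simp only [hT, mem_filter, mem_univ, true_and] at hp ⊢
      obtain ⟨h1, h2⟩ := hp
      rw [← h2]; exact h1
    · intro b hb
      simp only [hT, mem_filter, mem_univ, true_and] at hb ⊢
      exact ⟨hb, trivial⟩
    · intro p hp
      simp only [hT, mem_filter, mem_univ, true_and] at hp
      exact Prod.ext hp.2.symm rfl
    · intro b hb; rfl
  have hub : T.card ≤ 2 ^ r + (2 ^ r - 1) * 2 ^ (r - 1) := by
    rw [hcard]
    clear hcard
    rw [← Finset.add_sum_erase _ _ (mem_univ (0 : Fin r → Fin 2))]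
    have h0 : (univ.filter (fun b : Fin r → Fin 2 =>
        m ∣ ∑ i, ((0 : Fin r → Fin 2) i : ℕ) * (b i : ℕ))).card ≤ 2 ^ r := by
      calc _ ≤ (univ : Finset (Fin r → Fin 2)).card := Finset.card_filter_le _ _
        _ = 2 ^ r := by simp [Finset.card_univ]
    have hrest : ∑ a ∈ univ.erase (0 : Fin r → Fin 2),
        (univ.filter (fun b : Fin r → Fin 2 => m ∣ ∑ i, (a i : ℕ) * (b i : ℕ))).card
          ≤ (2 ^ r - 1) * 2 ^ (r - 1) := by
      have hb : ∀ a ∈ univ.erase (0 : Fin r → Fin 2),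
          (univ.filter (fun b : Fin r → Fin 2 => m ∣ ∑ i, (a i : ℕ) * (b i : ℕ))).card
            ≤ 2 ^ (r - 1) := by
        intro a ha
        have h2 := fiber_flip_bound hm a (Finset.ne_of_mem_erase ha)
        rw [hpow] at h2
        exact Nat.le_of_mul_le_mul_left h2 two_pos
      calc _ ≤ (univ.erase (0 : Fin r → Fin 2)).card • 2 ^ (r - 1) :=
            Finset.sum_le_card_nsmul _ _ _ hb
        _ = (2 ^ r - 1) * 2 ^ (r - 1) := by
            rw [smul_eq_mul, Finset.card_erase_of_mem (mem_univ _)]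
            simp [Finset.card_univ]
    exact Nat.add_le_add h0 hrest
  clear hcard
  have hcast : (T.card : ℝ) ≤ (2 ^ r : ℝ) + ((2 : ℝ) ^ r - 1) * 2 ^ (r - 1) := by
    have h1 : (1 : ℕ) ≤ 2 ^ r := Nat.one_le_two_pow
    calc (T.card : ℝ) ≤ ((2 ^ r + (2 ^ r - 1) * 2 ^ (r - 1) : ℕ) : ℝ) := by
          exact_mod_cast hub
      _ = (2 ^ r : ℝ) + ((2 : ℝ) ^ r - 1) * 2 ^ (r - 1) := by
          push_cast [h1]; ring
  exact hcast.trans (real_pow_bound r hr)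
end

section
/- Let r ≥ 1 be an integer, let m = ⌈√r⌉, and let Q = {q ∈ {0, 1, …, r} : m divides q}. Let M be the 2^r × 2^r real matrix whose rows and columns are indexed by vectors in {0,1}^r, with entries M_{a,b} = ∏_{q ∈ Q} (a·b − q)². Then M is entrywise nonnegative and rank(M) ≤ (r+1)^{2|Q|}. -/
open Finset

/-- Let `m = ⌈√r⌉` and let `Q` be the set of multiples of `m` in `{0, 1, …, r}`. The
`2^r × 2^r` matrix with rows and columns indexed by `{0,1}^r` and entries
`M_{a,b} = ∏_{q ∈ Q} (a·b − q)²` is entrywise nonnegative and has rank at most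
`(r+1)^(2|Q|)`. -/
theorem separation_matrix_nonneg_and_rank_le (r : ℕ) (hr : 1 ≤ r) (m : ℕ)
    (hm : m = ⌈Real.sqrt r⌉₊) (Q : Finset ℕ)
    (hQ : Q = (Finset.range (r + 1)).filter (fun q => m ∣ q))
    (M : Matrix (Fin r → Fin 2) (Fin r → Fin 2) ℝ)
    (hM : ∀ a b, M a b = ∏ q ∈ Q, (((∑ i, (a i : ℕ) * (b i : ℕ) : ℕ) : ℝ) - (q : ℝ)) ^ 2) :
    (∀ a b, 0 ≤ M a b) ∧ M.rank ≤ (r + 1) ^ (2 * Q.card) := by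
  classical
  constructor
  · intro a b
    rw [hM]
    exact Finset.prod_nonneg fun q _ => sq_nonneg _
  · let ι := (Fin 2 × ↥Q) → Fin (r + 1)
    let U : (Fin r → Fin 2) → ℕ → Fin (r + 1) → ℝ := fun a q i =>
      if h : (i : ℕ) < r then (a ⟨i, h⟩ : ℝ) else -(q : ℝ)
    let V : (Fin r → Fin 2) → Fin (r + 1) → ℝ := fun b i =>
      if h : (i : ℕ) < r then (b ⟨i, h⟩ : ℝ) else 1
    let A : Matrix (Fin r → Fin 2) ι ℝ := fun a f => ∏ p, U a (p.2 : ℕ) (f p)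
    let B : Matrix ι (Fin r → Fin 2) ℝ := fun f b => ∏ p, V b (f p)
    have hfac : ∀ (a b : Fin r → Fin 2) (q : ℕ),
        (∑ i, U a q i * V b i) =
          ((∑ i, (a i : ℕ) * (b i : ℕ) : ℕ) : ℝ) - (q : ℝ) := by
      intro a b q
      rw [Fin.sum_univ_castSucc]
      have h1 : ∀ i : Fin r, U a q i.castSucc * V b i.castSucc
          = (((a i : ℕ) * (b i : ℕ) : ℕ) : ℝ) := by
        intro i
        simp [U, V, i.is_lt]
      have h2 : U a q (Fin.last r) * V b (Fin.last r) = -(q : ℝ) := by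
        simp [U, V]
      rw [Finset.sum_congr rfl (fun i _ => h1 i), h2]
      push_cast
      ring
    have hMAB : M = A * B := by
      ext a b
      rw [hM, Matrix.mul_apply]
      have step1 : ∏ q ∈ Q, (((∑ i, (a i : ℕ) * (b i : ℕ) : ℕ) : ℝ) - (q : ℝ)) ^ 2
          = ∏ p : Fin 2 × ↥Q, (∑ i, U a (p.2 : ℕ) i * V b i) := by
        rw [Fintype.prod_prod_type]
        simp only [hfac a b]
        rw [Finset.prod_const, Finset.card_univ, Fintype.card_fin,
          ← Finset.prod_pow]
        exact (Finset.prod_coe_sort _ _).symm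
      rw [step1, Finset.prod_univ_sum]
      rw [Fintype.piFinset_univ]
      exact Finset.sum_congr rfl fun f _ => (Finset.prod_mul_distrib)
    calc M.rank = (A * B).rank := by rw [hMAB]
      _ ≤ B.rank := Matrix.rank_mul_le_right A B
      _ ≤ Fintype.card ι := Matrix.rank_le_card_height B
      _ = (r + 1) ^ (2 * Q.card) := by
          simp [ι, Fintype.card_fun, Fintype.card_prod, Fintype.card_coe, mul_comm]
end

section
/- Let k, d' ∈ ℕ, let A be a real k×d' matrix, let b ∈ ℝ^k, and let Q = {x ∈ ℝ^{d'} : Ax ≤ b entrywise}. Then every extreme point of Q has all of its coordinates in the subfield of ℝ generated over ℚ by the entries of A and the entries of b. -/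
open Filter Topology Matrix Set

/-!
Let `F` be the subfield generated by the entries of `A` and `b`, and let `σ : ℝ → F` be an
`F`-linear retraction (it exists because `ℝ` is an `F`-vector space). Since `A` and `b` have entries
in `F`, applying `σ` coordinatewise to an extreme point `x` gives a point `y` that satisfies with
equality every constraint that is tight at `x`. But an extreme point is the only such point:
otherwise `x ± t (y - x)` stays in `Q` for small `t ≠ 0`, as the slack constraints remain slack.
Hence `x = y` has coordinates in `F`.
-/

theorem Set.eq_zero_of_add_mem_of_sub_mem_of_mem_extremePoints {𝕜 E : Type*} [DivisionRing 𝕜]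
    [LinearOrder 𝕜] [IsStrictOrderedRing 𝕜] [AddCommGroup E] [Module 𝕜 E] {s : Set E} {x y : E}
    (hx : x ∈ s.extremePoints 𝕜) (hadd : x + y ∈ s) (hsub : x - y ∈ s) : y = 0 := by
  have : Invertible (2 : 𝕜) := invertibleOfNonzero two_ne_zero
  simpa using hx.2 hadd hsub (mem_openSegment_add_sub x y)

theorem Subfield.exists_linearMap_retraction {K : Type*} [Field K] (F : Subfield K) :
    ∃ σ : K →ₗ[F] F, ∀ a : F, σ a = a := by
  obtain ⟨σ, hσ⟩ := (Algebra.linearMap F K).exists_leftInverse_of_injective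
    (LinearMap.ker_eq_bot.2 (algebraMap F K).injective)
  exact ⟨σ, LinearMap.congr_fun hσ⟩

section Polyhedron

variable {𝕜 m n : Type*} [Field 𝕜] [LinearOrder 𝕜] [IsStrictOrderedRing 𝕜] [TopologicalSpace 𝕜]
  [OrderTopology 𝕜] [Finite m] [Fintype n] {A : Matrix m n 𝕜} {b : m → 𝕜} {x : n → 𝕜}

theorem Matrix.eventually_mulVec_add_smul_le {d : n → 𝕜} (hx : A *ᵥ x ≤ b)
    (hd : ∀ i, (A *ᵥ x) i = b i → (A *ᵥ d) i = 0) :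
    ∀ᶠ t in 𝓝 (0 : 𝕜), A *ᵥ (x + t • d) ≤ b := by
  simp only [mulVec_add, mulVec_smul, Pi.le_def, Pi.add_apply, Pi.smul_apply, smul_eq_mul]
  refine eventually_all.2 fun i => ?_
  rcases (hx i).eq_or_lt with htight | hslack
  · exact Eventually.of_forall fun t => by simp [htight, hd i htight]
  · have hcont : Tendsto (fun t : 𝕜 => (A *ᵥ x) i + t * (A *ᵥ d) i) (𝓝 0) (𝓝 ((A *ᵥ x) i)) :=
      (continuous_const.add (continuous_id.mul continuous_const)).tendsto' 0 _ (by simp)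
    exact (hcont.eventually_lt_const hslack).mono fun t => le_of_lt

theorem Matrix.eq_of_mem_extremePoints_of_tight_mulVec_eq {y : n → 𝕜}
    (hx : x ∈ {x | A *ᵥ x ≤ b}.extremePoints 𝕜)
    (hy : ∀ i, (A *ᵥ x) i = b i → (A *ᵥ y) i = b i) : y = x := by
  have hd : ∀ i, (A *ᵥ x) i = b i → (A *ᵥ (y - x)) i = 0 := fun i hi => by
    simp [mulVec_sub, hi, hy i hi]
  have hboth : ∀ᶠ t in 𝓝 (0 : 𝕜), A *ᵥ (x + t • (y - x)) ≤ b ∧ A *ᵥ (x - t • (y - x)) ≤ b := by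
    refine Eventually.and (eventually_mulVec_add_smul_le hx.1 hd) ?_
    have hneg := (continuous_neg.tendsto' (0 : 𝕜) 0 neg_zero).eventually
      (eventually_mulVec_add_smul_le hx.1 hd)
    simpa [neg_smul, ← sub_eq_add_neg] using hneg
  have hne : ∀ᶠ t in 𝓝[≠] (0 : 𝕜), t ≠ 0 := self_mem_nhdsWithin
  obtain ⟨t, ⟨hadd, hsub⟩, ht⟩ := ((hboth.filter_mono nhdsWithin_le_nhds).and hne).exists
  have := Set.eq_zero_of_add_mem_of_sub_mem_of_mem_extremePoints hx hadd hsub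
  exact sub_eq_zero.1 ((smul_eq_zero.1 this).resolve_left ht)

theorem Matrix.apply_mem_subfield_of_mem_extremePoints (F : Subfield 𝕜) (hA : ∀ i j, A i j ∈ F)
    (hb : ∀ i, b i ∈ F) (hx : x ∈ {x | A *ᵥ x ≤ b}.extremePoints 𝕜) (j : n) : x j ∈ F := by
  obtain ⟨σ, hσ⟩ := F.exists_linearMap_retraction
  have hσ_mulVec : ∀ i, (σ ((A *ᵥ x) i) : 𝕜) = (A *ᵥ fun j => (σ (x j) : 𝕜)) i := fun i => by
    simp only [mulVec, dotProduct, map_sum]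
    push_cast
    refine Finset.sum_congr rfl fun j _ => ?_
    rw [show A i j * x j = (⟨A i j, hA i j⟩ : F) • x j from rfl, map_smul]
    rfl
  have hfix : (fun j => (σ (x j) : 𝕜)) = x :=
    eq_of_mem_extremePoints_of_tight_mulVec_eq hx fun i hi => by
      rw [← hσ_mulVec, hi]; exact congrArg Subtype.val (hσ ⟨b i, hb i⟩)
  exact hfix ▸ (σ (x j)).2

end Polyhedron

/-- Every extreme point of a polyhedron `Q = {x : Ax ≤ b}` has all of its coordinates in the
subfield of `ℝ` generated (over `ℚ`) by the entries of `A` and `b`. -/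
theorem extremePoint_coords_mem_subfield (k d' : ℕ) (A : Matrix (Fin k) (Fin d') ℝ)
    (b : Fin k → ℝ) (Q : Set (Fin d' → ℝ))
    (hQ : Q = {x : Fin d' → ℝ | ∀ i, ∑ j, A i j * x j ≤ b i}) :
    ∀ x ∈ Set.extremePoints ℝ Q, ∀ j : Fin d',
      x j ∈ Subfield.closure
        ((Set.range fun p : Fin k × Fin d' => A p.1 p.2) ∪ Set.range b) := by
  subst hQ
  intro x hx j
  exact A.apply_mem_subfield_of_mem_extremePoints _
    (fun i j => Subfield.subset_closure (.inl ⟨(i, j), rfl⟩))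
    (fun i => Subfield.subset_closure (.inr ⟨i, rfl⟩)) hx j
end

section
/- Let d ≥ 2, let q ∈ S, let c ∈ (−1, 1), and let H = {x ∈ ℝ^d : ⟨q,x⟩ = c} (a hyperplane meeting the interior of B, where q is the centre of one of the two solid caps into which H cuts B). Let U, W ⊆ S be sets satisfying: (a) ρ(u,q) ≤ ρ(w,q) for all u ∈ U and w ∈ W; and (b) ⟨q,w⟩ < c for all w ∈ W. Then for every u' ∈ conv(U), every w' ∈ conv(W) and every t ≥ 0 we have ⟨q, w' + t(w' − u')⟩ < c; in particular, the ray {w' + t(w' − u') : t ≥ 0} is disjoint from H and lies on the opposite side of H from q. -/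
/- Being spherically closer to `q` means having a larger inner product with `q`, since `arccos`
is decreasing on `[-1, 1]`. Hence `⟪q, w⟫ ≤ ⟪q, u⟫` for `u ∈ U`, `w ∈ W`, and, the functional
`⟪q, ·⟫` being linear, the same holds on the convex hulls. Along the ray `w' + t • (w' - u')`
this functional therefore does not increase, so it stays below its value `⟪q, w'⟫ < c`. -/

open scoped RealInnerProductSpace

/-- The spherical distance between two points of the unit sphere in `ℝ^d`:
the angle `arccos⟨x,y⟩ ∈ [0, π]`. -/
noncomputable def sphericalDist {d : ℕ} (x y : EuclideanSpace ℝ (Fin d)) : ℝ :=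
  Real.arccos ⟪x, y⟫

section LinearFunctional

variable {E : Type*} [AddCommGroup E] [Module ℝ E] (f : E →ₗ[ℝ] ℝ) {s t : Set E} {x y : E}

theorem LinearMap.map_lt_of_mem_convexHull {c : ℝ} (hs : ∀ z ∈ s, f z < c)
    (hx : x ∈ convexHull ℝ s) : f x < c :=
  convexHull_min hs (convex_halfSpace_lt f.isLinear c) hx

theorem LinearMap.map_le_map_of_mem_convexHull (hst : ∀ a ∈ s, ∀ b ∈ t, f a ≤ f b)
    (hx : x ∈ convexHull ℝ s) (hy : y ∈ convexHull ℝ t) : f x ≤ f y := by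
  have hx_le : ∀ b ∈ t, f x ≤ f b := fun b hb =>
    convexHull_min (fun a ha => hst a ha b hb) (convex_halfSpace_le f.isLinear (f b)) hx
  exact convexHull_min hx_le (convex_halfSpace_ge f.isLinear (f x)) hy

theorem LinearMap.map_add_smul_sub_le (hxy : f x ≤ f y) {r : ℝ} (hr : 0 ≤ r) :
    f (x + r • (x - y)) ≤ f x := by
  have : r * (f x - f y) ≤ 0 := mul_nonpos_of_nonneg_of_nonpos hr (sub_nonpos.mpr hxy)
  simpa only [map_add, map_smul, map_sub, smul_eq_mul] using add_le_of_nonpos_right this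

end LinearFunctional

theorem real_inner_mem_Icc_of_mem_sphere {F : Type*} [NormedAddCommGroup F]
    [InnerProductSpace ℝ F] {x y : F} (hx : x ∈ Metric.sphere (0 : F) 1)
    (hy : y ∈ Metric.sphere (0 : F) 1) : ⟪x, y⟫ ∈ Set.Icc (-1 : ℝ) 1 := by
  have h := abs_real_inner_le_norm x y
  rw [mem_sphere_zero_iff_norm.mp hx, mem_sphere_zero_iff_norm.mp hy, one_mul] at h
  exact abs_le.mp h

theorem real_inner_le_real_inner_of_sphericalDist_le {d : ℕ} {q x y : EuclideanSpace ℝ (Fin d)}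
    (hq : q ∈ Metric.sphere 0 1) (hx : x ∈ Metric.sphere 0 1) (hy : y ∈ Metric.sphere 0 1)
    (hxy : sphericalDist x q ≤ sphericalDist y q) : ⟪q, y⟫ ≤ ⟪q, x⟫ := by
  rw [real_inner_comm y q, real_inner_comm x q]
  exact (Real.strictAntiOn_arccos.le_iff_ge (real_inner_mem_Icc_of_mem_sphere hx hq)
    (real_inner_mem_Icc_of_mem_sphere hy hq)).mp hxy

theorem ray_stays_on_far_side_general (d : ℕ) (q : EuclideanSpace ℝ (Fin d))
    (hq : q ∈ Metric.sphere (0 : EuclideanSpace ℝ (Fin d)) 1) (c : ℝ)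
    (U W : Set (EuclideanSpace ℝ (Fin d)))
    (hU : U ⊆ Metric.sphere (0 : EuclideanSpace ℝ (Fin d)) 1)
    (hW : W ⊆ Metric.sphere (0 : EuclideanSpace ℝ (Fin d)) 1)
    (hUW : ∀ u ∈ U, ∀ w ∈ W, sphericalDist u q ≤ sphericalDist w q)
    (hWside : ∀ w ∈ W, ⟪q, w⟫ < c) :
    ∀ u' ∈ convexHull ℝ U, ∀ w' ∈ convexHull ℝ W, ∀ t : ℝ, 0 ≤ t →
      ⟪q, w' + t • (w' - u')⟫ < c := by
  intro u' hu' w' hw' t ht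
  let f := innerₗ (EuclideanSpace ℝ (Fin d)) q
  have hWU : ∀ w ∈ W, ∀ u ∈ U, f w ≤ f u := fun w hw u hu =>
    real_inner_le_real_inner_of_sphericalDist_le hq (hU hu) (hW hw) (hUW u hu w hw)
  calc f (w' + t • (w' - u'))
      ≤ f w' := f.map_add_smul_sub_le (f.map_le_map_of_mem_convexHull hWU hw' hu') ht
    _ < c := f.map_lt_of_mem_convexHull hWside hw'

/-- Let `H = {x : ⟨q,x⟩ = c}` be a hyperplane meeting the interior of the unit ball, with
`q ∈ S` the centre of one of the two caps it cuts off. If `U, W ⊆ S` are such that every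
point of `U` is spherically at least as close to `q` as every point of `W`, and every point
of `W` lies strictly on the far side of `H` from `q`, then every ray starting in `conv(W)`
and pointing away from a point of `conv(U)` stays strictly on the far side of `H`. -/
theorem ray_stays_on_far_side (d : ℕ) (hd : 2 ≤ d) (q : EuclideanSpace ℝ (Fin d))
    (hq : q ∈ Metric.sphere (0 : EuclideanSpace ℝ (Fin d)) 1) (c : ℝ)
    (hc : c ∈ Set.Ioo (-1 : ℝ) 1)
    (U W : Set (EuclideanSpace ℝ (Fin d)))
    (hU : U ⊆ Metric.sphere (0 : EuclideanSpace ℝ (Fin d)) 1)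
    (hW : W ⊆ Metric.sphere (0 : EuclideanSpace ℝ (Fin d)) 1)
    (hUW : ∀ u ∈ U, ∀ w ∈ W, sphericalDist u q ≤ sphericalDist w q)
    (hWside : ∀ w ∈ W, ⟪q, w⟫ < c) :
    ∀ u' ∈ convexHull ℝ U, ∀ w' ∈ convexHull ℝ W, ∀ t : ℝ, 0 ≤ t →
      ⟪q, w' + t • (w' - u')⟫ < c :=
  ray_stays_on_far_side_general d q hq c U W hU hW hUW hWside
end

section
/- Let m ≥ 1, let S be a finite set, and let S = S₁ ∪ … ∪ S_m be a partition of S into nonempty pairwise disjoint subsets. Let M be an entrywise-nonnegative real matrix with rows indexed by {1,…,m} and columns indexed by S. Suppose that M_{j,s} > 0 whenever j ∈ {1,…,m} and s ∈ S ∖ S_j, and suppose that M_{j,s}·M_{k,t} ≤ M_{j,t}·M_{k,s} whenever j ∈ {1,…,m}, k ∈ {1,…,j−1}, s ∈ S_j and t ∈ S₁ ∪ … ∪ S_{j−1}. Then there exist positive real numbers α₁, …, α_m such that α_j·M_{j,s} ≤ α_k·M_{k,s} whenever j, k ∈ {1,…,m} and s ∈ S_j. -/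
/-- Rescaling lemma: let the columns of an entrywise-nonnegative matrix `M` (with rows
indexed by `Fin m`) be partitioned into `m` nonempty blocks via a surjection `σ` (column `s`
lies in block `S_j` iff `σ s = j`). Suppose `M_{j,s} > 0` whenever `s ∉ S_j`, and
`M_{j,s}·M_{k,t} ≤ M_{j,t}·M_{k,s}` whenever `k < j`, `s ∈ S_j` and `t ∈ S_1 ∪ … ∪ S_{j-1}`.
Then the rows can be rescaled by positive reals `α_j` so that `α_j·M_{j,s} ≤ α_k·M_{k,s}`
whenever `s ∈ S_j`. -/
theorem matrix_rescaling_lemma (m : ℕ) (hm : 1 ≤ m) (S : Type*) [Fintype S]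
    (σ : S → Fin m) (hσ : Function.Surjective σ)
    (M : Matrix (Fin m) S ℝ)
    (hnn : ∀ j s, 0 ≤ M j s)
    (hpos : ∀ j s, σ s ≠ j → 0 < M j s)
    (hineq : ∀ j k : Fin m, ∀ s t : S,
      k < j → σ s = j → σ t < j → M j s * M k t ≤ M j t * M k s) :
    ∃ α : Fin m → ℝ, (∀ j, 0 < α j) ∧
      ∀ j k : Fin m, ∀ s : S, σ s = j → α j * M j s ≤ α k * M k s := by
  classical
  haveI hS : Nonempty S := by
    obtain ⟨s, -⟩ := hσ ⟨0, hm⟩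
    exact ⟨s⟩
  haveI : Nonempty (Fin m) := ⟨⟨0, hm⟩⟩
  have hSne : (Finset.univ : Finset S).Nonempty := Finset.univ_nonempty
  have hPne : (Finset.univ : Finset (Fin m × S)).Nonempty := Finset.univ_nonempty
  have key : ∀ n : ℕ, n ≤ m → ∃ α : Fin m → ℝ, (∀ j, 0 < α j) ∧
      ∀ j k : Fin m, ∀ s : S, σ s = j → (j : ℕ) < n → (k : ℕ) < n →
        α j * M j s ≤ α k * M k s := by
    intro n
    induction n with
    | zero =>
      exact fun _ => ⟨fun _ => 1, fun _ => one_pos,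
        fun j k s _ h _ => absurd h (by omega)⟩
    | succ n ih =>
      intro hn
      obtain ⟨α, hαpos, hα⟩ := ih (by omega)
      set j₀ : Fin m := ⟨n, hn⟩ with hj₀def
      have hj₀val : (j₀ : ℕ) = n := rfl
      -- g t is the lower-bound constraint quantity for column t
      set g : S → ℝ := fun t => if σ t < j₀ then α (σ t) * M (σ t) t / M j₀ t else 0
        with hgdef
      set L : ℝ := Finset.univ.sup' hSne g with hLdef
      have hgnn : ∀ t, 0 ≤ g t := by
        intro t
        simp only [hgdef]
        split
        · rename_i h
          have hMpos : 0 < M j₀ t := hpos j₀ t (by intro he; rw [he] at h; exact lt_irrefl _ h)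
          exact div_nonneg (mul_nonneg (hαpos _).le (hnn _ _)) hMpos.le
        · exact le_rfl
      have hLnn : 0 ≤ L := by
        obtain ⟨t₀⟩ := hS
        exact le_trans (hgnn t₀) (Finset.le_sup' g (Finset.mem_univ t₀))
      set h : Fin m × S → ℝ := fun p =>
        if (p.1 : ℕ) < n ∧ σ p.2 = j₀ ∧ 0 < M j₀ p.2
        then α p.1 * M p.1 p.2 / M j₀ p.2 else L + 1 with hhdef
      set a : ℝ := Finset.univ.inf' hPne h with hadef
      have hhpos : ∀ p, 0 < h p := by
        intro p
        simp only [hhdef]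
        split
        · rename_i hcond
          obtain ⟨hk, hs, hMj⟩ := hcond
          have hne : σ p.2 ≠ p.1 := by
            rw [hs]; intro he
            have : n = (p.1 : ℕ) := congrArg Fin.val he
            omega
          exact div_pos (mul_pos (hαpos _) (hpos _ _ hne)) hMj
        · linarith
      have hapos : 0 < a := by
        obtain ⟨p, -, hp⟩ := Finset.exists_mem_eq_inf' hPne h
        rw [hadef, hp]; exact hhpos p
      -- lower bound: a is at least each constraint from earlier blocks
      have haL : ∀ t : S, σ t < j₀ → α (σ t) * M (σ t) t ≤ a * M j₀ t := by
        intro t ht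
        have hMjt : 0 < M j₀ t := hpos j₀ t (by intro he; rw [he] at ht; exact lt_irrefl _ ht)
        have hmain : α (σ t) * M (σ t) t / M j₀ t ≤ a := by
          refine Finset.le_inf' hPne _ (fun p _ => ?_)
          simp only [hhdef]
          split
          · rename_i hcond
            obtain ⟨hk, hs, hMj⟩ := hcond
            rw [div_le_div_iff₀ hMjt hMj]
            have hklt : (p.1 : ℕ) < m := p.1.isLt
            have h1 : α (σ t) * M (σ t) t ≤ α p.1 * M p.1 t := by
              have : (σ t : ℕ) < n := ht
              exact hα (σ t) p.1 t rfl this hk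
            have h2 : M j₀ p.2 * M p.1 t ≤ M j₀ t * M p.1 p.2 := by
              refine hineq j₀ p.1 p.2 t ?_ hs ?_
              · exact Fin.lt_def.mpr (by omega)
              · exact ht
            nlinarith [hnn j₀ p.2, (hαpos p.1).le, hnn p.1 t, hnn j₀ t,
              mul_le_mul_of_nonneg_right h1 (hnn j₀ p.2),
              mul_le_mul_of_nonneg_left h2 (hαpos p.1).le]
          · have : α (σ t) * M (σ t) t / M j₀ t = g t := by
              simp only [hgdef, if_pos ht]
            rw [this]
            have : g t ≤ L := Finset.le_sup' g (Finset.mem_univ t)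
            linarith
        rw [div_le_iff₀ hMjt] at hmain
        exact hmain
      -- upper bound
      have haU : ∀ k : Fin m, (k : ℕ) < n → ∀ s : S, σ s = j₀ →
          a * M j₀ s ≤ α k * M k s := by
        intro k hk s hs
        rcases eq_or_lt_of_le (hnn j₀ s) with hz | hMj
        · rw [← hz, mul_zero]
          exact mul_nonneg (hαpos k).le (hnn k s)
        · have hle : a ≤ h (k, s) := Finset.inf'_le h (Finset.mem_univ (k, s))
          rw [hhdef] at hle
          simp only [if_pos (⟨hk, hs, hMj⟩ : (k : ℕ) < n ∧ σ s = j₀ ∧ 0 < M j₀ s)] at hle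
          rwa [le_div_iff₀ hMj] at hle
      refine ⟨Function.update α j₀ a, ?_, ?_⟩
      · intro j
        rcases eq_or_ne j j₀ with rfl | hne
        · rw [Function.update_self]; exact hapos
        · rw [Function.update_of_ne hne]; exact hαpos j
      · intro j k s hs hj hk
        rcases Nat.lt_or_ge (j : ℕ) n with hjn | hjn
        · have hjne : j ≠ j₀ := by intro he; rw [he] at hjn; omega
          rw [Function.update_of_ne hjne]
          rcases Nat.lt_or_ge (k : ℕ) n with hkn | hkn
          · have hkne : k ≠ j₀ := by intro he; rw [he] at hkn; omega
            rw [Function.update_of_ne hkne]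
            exact hα j k s hs hjn hkn
          · have hkn' : (k : ℕ) = n := by omega
            have hke : k = j₀ := Fin.ext hkn'
            rw [hke, Function.update_self]
            have : σ s < j₀ := by rw [hs]; exact Fin.lt_def.mpr (by omega)
            have := haL s this
            rwa [hs] at this
        · have hjn' : (j : ℕ) = n := by omega
          have hje : j = j₀ := Fin.ext hjn'
          rcases Nat.lt_or_ge (k : ℕ) n with hkn | hkn
          · have hkne : k ≠ j₀ := by intro he; rw [he] at hkn; omega
            rw [hje, Function.update_self, Function.update_of_ne hkne]
            exact haU k hkn s (hje ▸ hs)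
          · have hkn' : (k : ℕ) = n := by omega
            have hke : k = j₀ := Fin.ext hkn'
            rw [hje, hke]
  obtain ⟨α, hαpos, hα⟩ := key m le_rfl
  exact ⟨α, hαpos, fun j k s hs => hα j k s hs j.isLt k.isLt⟩
end
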